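/- Every Alster topological space is totally Lindelöf. -/

import Mathlib

open Set Topology

/-- A filter base on `X`: a nonempty family of subsets of `X`, not containing `∅`,
closed under pairwise intersections. -/
def FilterBaseOn (X : Type*) (F : Set (Set X)) : Prop :=
  F.Nonempty ∧ ∅ ∉ F ∧ ∀ A ∈ F, ∀ B ∈ F, A ∩ B ∈ F

/-- `F` converges to the set `W`: every open set containing `W` contains a member of `F`. -/
def ConvergesTo {X : Type*} [TopologicalSpace X] (F : Set (Set X)) (W : Set X) : Prop :=
  ∀ U : Set X, IsOpen U → W ⊆ U → ∃ A ∈ F, A ⊆ U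

/-- `F` is total: every filter base extending `F` has nonempty adherence
(intersection of the closures of all its members). -/
def TotalFB {X : Type*} [TopologicalSpace X] (F : Set (Set X)) : Prop :=
  ∀ H : Set (Set X), FilterBaseOn X H → F ⊆ H → (⋂ A ∈ H, closure A).Nonempty

/-- `F` is stable under countable intersections: every countable subfamily of `F`
has a member of `F` contained in its intersection. -/
def StableCI {X : Type*} (F : Set (Set X)) : Prop :=
  ∀ S ⊆ F, S.Countable → ∃ H ∈ F, H ⊆ ⋂₀ S

/-- `F` is ω-closed: the intersection of any nonempty countable subfamily of `F` belongs to `F`. -/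
def OmegaClosedFB {X : Type*} (F : Set (Set X)) : Prop :=
  ∀ S ⊆ F, S.Countable → S.Nonempty → ⋂₀ S ∈ F

/-- `F` is δ-stable: every nonempty countable subfamily of `F` has nonempty intersection. -/
def DeltaStableFB {X : Type*} (F : Set (Set X)) : Prop :=
  ∀ S ⊆ F, S.Countable → S.Nonempty → (⋂₀ S).Nonempty

/-- `G_δ(K)`: the family of Gδ subsets (countable intersections of open sets) containing `K`. -/
def GdeltaNbhds {X : Type*} [TopologicalSpace X] (K : Set X) : Set (Set X) :=
  {G | K ⊆ G ∧ IsGδ G}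

/-- `F ∨ G = {F₀ ∩ F₁ : F₀, F₁ ∈ F ∪ G}`. -/
def joinFB {X : Type*} (F G : Set (Set X)) : Set (Set X) :=
  {A | ∃ F₀ ∈ F ∪ G, ∃ F₁ ∈ F ∪ G, A = F₀ ∩ F₁}

/-- `X` is totally Lindelöf: every filter base stable under countable intersections
extends to a total filter base stable under countable intersections. -/
def TotallyLindelofSpace (X : Type*) [TopologicalSpace X] : Prop :=
  ∀ F : Set (Set X), FilterBaseOn X F → StableCI F →
    ∃ H : Set (Set X), FilterBaseOn X H ∧ StableCI H ∧ F ⊆ H ∧ TotalFB H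

/-- `X` is Alster: every cover of `X` by Gδ sets such that every compact subset of `X`
is contained in a single member admits a countable subcover. -/
def AlsterSpace (X : Type*) [TopologicalSpace X] : Prop :=
  ∀ 𝒢 : Set (Set X), (∀ G ∈ 𝒢, IsGδ G) → (∀ K : Set X, IsCompact K → ∃ G ∈ 𝒢, K ⊆ G) →
    ∃ 𝒞 ⊆ 𝒢, 𝒞.Countable ∧ ⋃₀ 𝒞 = Set.univ

/-- `D` is a discrete subset: each of its points has an open neighborhood meeting `D`
only in that point. -/
def IsDiscreteSubset {X : Type*} [TopologicalSpace X] (D : Set X) : Prop :=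
  ∀ a ∈ D, ∃ U : Set X, IsOpen U ∧ U ∩ D = {a}

/-- The first uncountable ordinal ω₁. -/
noncomputable def omega1 : Ordinal := (Cardinal.aleph 1).ord


/-!
Given a filter base `F` stable under countable intersections, the Alster property yields a
compact set `K` such that every Gδ set containing `K` meets every member of `F`: otherwise the
Gδ sets missing some member of `F` would form a cover to which the property applies, and a member
of `F` below the countably many witnesses would be empty. The sets `A ∩ G`, with `A ∈ F` and `G`
a Gδ set containing `K`, then form a filter base stable under countable intersections which
extends `F` and converges to the compact set `K`, hence is total.
-/

section

open Filter

variable {X : Type*}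

theorem FilterBaseOn.hasBasis {H : Set (Set X)} (hH : FilterBaseOn X H) :
    (⨅ A ∈ H, 𝓟 A).HasBasis (· ∈ H) id :=
  hasBasis_biInf_principal
    (fun A hA B hB => ⟨A ∩ B, hH.2.2 A hA B hB, inter_subset_left, inter_subset_right⟩) hH.1

theorem FilterBaseOn.neBot {H : Set (Set X)} (hH : FilterBaseOn X H) :
    (⨅ A ∈ H, 𝓟 A).NeBot :=
  hH.hasBasis.neBot_iff.2 fun hA => nonempty_iff_ne_empty.2 fun h => hH.2.1 (h ▸ hA)

theorem FilterBaseOn.image2_inter {F 𝒢 : Set (Set X)} (hF : FilterBaseOn X F) (h𝒢 : 𝒢.Nonempty)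
    (h𝒢_inter : ∀ G ∈ 𝒢, ∀ G' ∈ 𝒢, G ∩ G' ∈ 𝒢)
    (hmeet : ∀ A ∈ F, ∀ G ∈ 𝒢, (A ∩ G).Nonempty) :
    FilterBaseOn X (image2 (· ∩ ·) F 𝒢) := by
  obtain ⟨A, hA⟩ := hF.1
  obtain ⟨G, hG⟩ := h𝒢
  refine ⟨⟨A ∩ G, mem_image2_of_mem hA hG⟩, ?_, ?_⟩
  · rintro ⟨A, hA, G, hG, hAG⟩
    exact (hmeet A hA G hG).ne_empty hAG
  · rintro _ ⟨A, hA, G, hG, rfl⟩ _ ⟨A', hA', G', hG', rfl⟩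
    exact ⟨A ∩ A', hF.2.2 A hA A' hA', G ∩ G', h𝒢_inter G hG G' hG',
      inter_inter_inter_comm A A' G G'⟩

theorem StableCI.image2_inter {F 𝒢 : Set (Set X)} (hF : StableCI F) (h𝒢 : StableCI 𝒢) :
    StableCI (image2 (· ∩ ·) F 𝒢) := by
  intro S hS hSc
  have := hSc.to_subtype
  choose a ha g hg hag using fun B : S => hS B.2
  obtain ⟨A₀, hA₀, hA₀a⟩ := hF (range a) (range_subset_iff.2 ha) (countable_range a)
  obtain ⟨G₀, hG₀, hG₀g⟩ := h𝒢 (range g) (range_subset_iff.2 hg) (countable_range g)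
  refine ⟨A₀ ∩ G₀, mem_image2_of_mem hA₀ hG₀, fun x hx => mem_sInter.2 fun B hB => ?_⟩
  rw [← show a ⟨B, hB⟩ ∩ g ⟨B, hB⟩ = B from hag ⟨B, hB⟩]
  exact ⟨mem_sInter.1 (hA₀a hx.1) _ (mem_range_self _),
    mem_sInter.1 (hG₀g hx.2) _ (mem_range_self _)⟩

section Topology

variable [TopologicalSpace X] {K : Set X}

theorem IsCompact.exists_clusterPt_of_le_nhdsSet {f : Filter X} [f.NeBot] (hK : IsCompact K)
    (hf : f ≤ 𝓝ˢ K) : ∃ x ∈ K, ClusterPt x f := by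
  by_contra! h
  have hdisj : Disjoint (𝓝ˢ K) f :=
    hK.disjoint_nhdsSet_left.2 fun x hx => clusterPt_iff_not_disjoint.not_left.1 (h x hx)
  exact NeBot.ne ‹_› (disjoint_self.1 (hdisj.mono_left hf))

theorem totalFB_of_convergesTo {H : Set (Set X)} (hK : IsCompact K) (hH : ConvergesTo H K) :
    TotalFB H := by
  intro H' hH' hHH'
  have := hH'.neBot
  have hle : (⨅ A ∈ H', 𝓟 A) ≤ 𝓝ˢ K := (hasBasis_nhdsSet K).ge_iff.2 fun U ⟨hU, hKU⟩ =>
    let ⟨A, hA, hAU⟩ := hH U hU hKU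
    hH'.hasBasis.mem_iff.2 ⟨A, hHH' hA, hAU⟩
  obtain ⟨x, -, hx⟩ := hK.exists_clusterPt_of_le_nhdsSet hle
  exact ⟨x, mem_iInter₂.2 fun A hA =>
    hH'.hasBasis.clusterPt_iff_forall_mem_closure.1 hx A hA⟩

theorem univ_mem_gdeltaNbhds : univ ∈ GdeltaNbhds K :=
  ⟨subset_univ K, .univ⟩

theorem inter_mem_gdeltaNbhds {G G' : Set X} (hG : G ∈ GdeltaNbhds K)
    (hG' : G' ∈ GdeltaNbhds K) : G ∩ G' ∈ GdeltaNbhds K :=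
  ⟨subset_inter hG.1 hG'.1, hG.2.inter hG'.2⟩

theorem stableCI_gdeltaNbhds : StableCI (GdeltaNbhds K) := fun S hS hSc =>
  ⟨⋂₀ S, ⟨subset_sInter fun _ hG => (hS hG).1, .sInter (fun _ hG => (hS hG).2) hSc⟩, subset_rfl⟩

theorem convergesTo_image2_inter_gdeltaNbhds {F : Set (Set X)} (hF : F.Nonempty) :
    ConvergesTo (image2 (· ∩ ·) F (GdeltaNbhds K)) K := fun U hU hKU =>
  let ⟨A, hA⟩ := hF
  ⟨A ∩ U, mem_image2_of_mem hA ⟨hKU, hU.isGδ⟩, inter_subset_right⟩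

theorem AlsterSpace.exists_isCompact_forall_inter_nonempty (hX : AlsterSpace X)
    {F : Set (Set X)} (hF : ∅ ∉ F) (hCI : StableCI F) :
    ∃ K, IsCompact K ∧ ∀ A ∈ F, ∀ G ∈ GdeltaNbhds K, (A ∩ G).Nonempty := by
  by_contra! h
  obtain ⟨𝒞, h𝒞, h𝒞c, h𝒞X⟩ := hX {G | IsGδ G ∧ ∃ A ∈ F, A ∩ G = ∅} (fun G hG => hG.1)
    fun K hK => by
      obtain ⟨A, hA, G, hG, hAG⟩ := h K hK
      exact ⟨G, ⟨hG.2, A, hA, hAG⟩, hG.1⟩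
  have := h𝒞c.to_subtype
  choose a ha haG using fun G : 𝒞 => (h𝒞 G.2).2
  obtain ⟨A₀, hA₀, hA₀a⟩ := hCI (range a) (range_subset_iff.2 ha) (countable_range a)
  have hA₀_empty : A₀ = ∅ := eq_empty_of_forall_notMem fun x hx => by
    obtain ⟨G, hG, hxG⟩ := mem_sUnion.1 (h𝒞X ▸ mem_univ x)
    have hxa : x ∈ a ⟨G, hG⟩ := mem_sInter.1 (hA₀a hx) _ (mem_range_self _)
    exact (haG ⟨G, hG⟩).subset ⟨hxa, hxG⟩
  exact hF (hA₀_empty ▸ hA₀)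

end Topology

end

theorem stmt2 {X : Type*} [TopologicalSpace X] (hA : AlsterSpace X) :
    TotallyLindelofSpace X := by
  intro F hF hCI
  obtain ⟨K, hK, hmeet⟩ := hA.exists_isCompact_forall_inter_nonempty hF.2.1 hCI
  have hbase : FilterBaseOn X (image2 (· ∩ ·) F (GdeltaNbhds K)) :=
    hF.image2_inter ⟨univ, univ_mem_gdeltaNbhds⟩ (fun _ hG _ hG' => inter_mem_gdeltaNbhds hG hG')
      hmeet
  exact ⟨_, hbase, hCI.image2_inter stableCI_gdeltaNbhds,
    fun A hA => ⟨A, hA, univ, univ_mem_gdeltaNbhds, inter_univ A⟩,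
    totalFB_of_convergesTo hK (convergesTo_image2_inter_gdeltaNbhds hF.1)⟩
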